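/- Density evolution identity for the check node update, negative values: let X₁, …, Xₙ be independent and identically distributed integer-valued random variables and let m ≤ -1 be an integer. Then the probability that the min-sum check node output (∏_{i=1}^n sign(X_i)) · min_{i} |X_i| is at most m equals Σ_{k odd, 0 ≤ k ≤ n} C(n, k) · P(X₁ ≤ m)^k · P(X₁ ≥ -m)^{n-k}. -/

import Mathlib

/-!
Since `m < 0`, the output is at most `m` exactly when the sign product is `-1` and every `|Xᵢ|`
is at least `-m`, i.e. when every `Xᵢ` lies in `(-∞, m] ∪ [-m, ∞)` and an odd number of them lie
in `(-∞, m]`. Splitting this event according to the set `A` of indices with `Xᵢ ≤ m` gives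
disjoint events, each of probability `P(X₁ ≤ m)^|A| · P(X₁ ≥ -m)^(n - |A|)` by independence, and
there are `C(n, k)` sets `A` of size `k`.
-/

open MeasureTheory ProbabilityTheory ENNReal Finset Function

theorem Int.prod_sign_eq_neg_one_pow {ι : Type*} {s : Finset ι} {x : ι → ℤ}
    (hx : ∀ i ∈ s, x i ≠ 0) : ∏ i ∈ s, (x i).sign = (-1) ^ #{i ∈ s | x i < 0} := by
  rw [← prod_const, prod_filter]
  refine prod_congr rfl fun i hi => ?_
  rcases (hx i hi).lt_or_gt with hneg | hpos
  · rw [if_pos hneg, Int.sign_eq_neg_one_of_neg hneg]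
  · rw [if_neg hpos.not_gt, Int.sign_eq_one_of_pos hpos]

theorem Int.prod_sign_mul_inf'_abs_le_iff {ι : Type*} [Fintype ι] (x : ι → ℤ)
    (h : (univ : Finset ι).Nonempty) {m : ℤ} (hm : m < 0) :
    (∏ i, (x i).sign) * univ.inf' h (fun i => |x i|) ≤ m ↔
      (∀ i, x i ≤ m ∨ -m ≤ x i) ∧ Odd #{i | x i ≤ m} := by
  set M := univ.inf' h (fun i => |x i|)
  have hM : 0 ≤ M := le_inf' _ _ fun i _ => abs_nonneg (x i)
  have hbound : -m ≤ M ↔ ∀ i, x i ≤ m ∨ -m ≤ x i := by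
    simp only [M, le_inf'_iff, mem_univ, true_implies, le_abs', neg_neg]
  have hcount (hx : ∀ i, x i ≤ m ∨ -m ≤ x i) : #{i | x i < 0} = #{i | x i ≤ m} :=
    congrArg card (filter_congr fun i _ => by have := hx i; omega)
  constructor
  · intro hle
    have hx0 : ∀ i ∈ univ, x i ≠ 0 := fun i _ hi => by
      rw [prod_eq_zero (mem_univ i) (by simp [hi]), zero_mul] at hle
      omega
    rw [Int.prod_sign_eq_neg_one_pow hx0] at hle
    rcases Nat.even_or_odd #{i | x i < 0} with heven | hodd
    · rw [heven.neg_one_pow] at hle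
      omega
    · rw [hodd.neg_one_pow] at hle
      have hx := hbound.1 (by omega)
      exact ⟨hx, hcount hx ▸ hodd⟩
  · rintro ⟨hx, hodd⟩
    have hx0 : ∀ i ∈ univ, x i ≠ 0 := fun i _ => by have := hx i; omega
    rw [Int.prod_sign_eq_neg_one_pow hx0, hcount hx, hodd.neg_one_pow]
    have := hbound.2 hx
    omega

section BinomialCount

variable {Ω ι β : Type*} [Fintype ι] [DecidableEq ι] {X : ι → Ω → β} {E F : Set β}

theorem pairwise_disjoint_iInter_preimage_ite (hEF : Disjoint E F) :
    Pairwise (Disjoint on fun A : Finset ι => ⋂ i, X i ⁻¹' (if i ∈ A then E else F)) := by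
  intro A B hAB
  obtain ⟨i, hi⟩ : ∃ i, ¬(i ∈ A ↔ i ∈ B) := by
    by_contra! h
    exact hAB (ext h)
  refine Disjoint.mono (Set.iInter_subset _ i) (Set.iInter_subset _ i) (Disjoint.preimage _ ?_)
  split_ifs <;> tauto

theorem setOf_forall_mem_union_and_card_eq_biUnion (hEF : Disjoint E F) (P : ℕ → Prop)
    [DecidablePred P] [DecidablePred (· ∈ E)] :
    {ω | (∀ i, X i ω ∈ E ∪ F) ∧ P #{i | X i ω ∈ E}} =
      ⋃ A ∈ ({A | P #A} : Finset (Finset ι)), ⋂ i, X i ⁻¹' (if i ∈ A then E else F) := by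
  ext ω
  simp only [Set.mem_ofPred_eq, Set.mem_iUnion, Set.mem_iInter, mem_filter, mem_univ, true_and,
    exists_prop, Set.mem_preimage]
  constructor
  · rintro ⟨hmem, hP⟩
    refine ⟨_, hP, fun i => ?_⟩
    split_ifs with hi
    exacts [(mem_filter.1 hi).2, (hmem i).resolve_left (by simpa using hi)]
  · rintro ⟨A, hP, hA⟩
    have hEA : ∀ i, X i ω ∈ E ↔ i ∈ A := fun i => by
      have := hA i
      split_ifs at this with hi
      exacts [iff_of_true this hi, iff_of_false (hEF.notMem_of_mem_right this) hi]
    refine ⟨fun i => ?_, ?_⟩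
    · have := hA i
      split_ifs at this
      exacts [Or.inl this, Or.inr this]
    · convert hP using 2
      ext i
      simp [hEA]

variable [MeasurableSpace Ω] [MeasurableSpace β] {μ : Measure Ω} {Y : Ω → β}

theorem measure_iInter_preimage_ite (hindep : iIndepFun X μ)
    (hident : ∀ i, IdentDistrib (X i) Y μ μ) (hE : MeasurableSet E) (hF : MeasurableSet F)
    (A : Finset ι) :
    μ (⋂ i, X i ⁻¹' (if i ∈ A then E else F)) =
      μ (Y ⁻¹' E) ^ #A * μ (Y ⁻¹' F) ^ (Fintype.card ι - #A) := by
  have hmeas : ∀ i, MeasurableSet (if i ∈ A then E else F) := fun i => by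
    split_ifs
    exacts [hE, hF]
  rw [hindep.meas_iInter fun i => ⟨_, hmeas i, rfl⟩]
  simp_rw [fun i => (hident i).measure_mem_eq (hmeas i), apply_ite, prod_ite, prod_const,
    filter_mem_eq_inter, univ_inter, filter_not, filter_mem_eq_inter, univ_inter, card_sdiff]
  simp

theorem measure_forall_mem_union_and_card_eq_sum_choose (hmeas : ∀ i, Measurable (X i))
    (hindep : iIndepFun X μ) (hident : ∀ i, IdentDistrib (X i) Y μ μ) (hE : MeasurableSet E)
    (hF : MeasurableSet F) (hEF : Disjoint E F) (P : ℕ → Prop) [DecidablePred P]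
    [DecidablePred (· ∈ E)] :
    μ {ω | (∀ i, X i ω ∈ E ∪ F) ∧ P #{i | X i ω ∈ E}} =
      ∑ k ∈ (range (Fintype.card ι + 1)).filter P,
        ((Fintype.card ι).choose k : ℝ≥0∞) * μ (Y ⁻¹' E) ^ k *
          μ (Y ⁻¹' F) ^ (Fintype.card ι - k) := by
  have hpiece (A : Finset ι) : MeasurableSet (⋂ i, X i ⁻¹' (if i ∈ A then E else F)) :=
    .iInter fun i => hmeas i (by split_ifs; exacts [hE, hF])
  rw [setOf_forall_mem_union_and_card_eq_biUnion hEF,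
    measure_biUnion_finset ((pairwise_disjoint_iInter_preimage_ite hEF).set_pairwise _)
      fun A _ => hpiece A]
  simp_rw [measure_iInter_preimage_ite hindep hident hE hF, sum_filter, ← powerset_univ]
  rw [sum_powerset_apply_card fun k =>
    if P k then μ (Y ⁻¹' E) ^ k * μ (Y ⁻¹' F) ^ (Fintype.card ι - k) else 0]
  refine sum_congr (by simp) fun k _ => ?_
  split_ifs <;> simp [nsmul_eq_mul, mul_assoc]

end BinomialCount

theorem de_check_node_neg_general {Ω : Type*} [MeasurableSpace Ω]
    (μ : Measure Ω)
    (n : ℕ) (hn : 0 < n) (X : Fin n → Ω → ℤ)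
    (hmeas : ∀ i, Measurable (X i))
    (hindep : iIndepFun X μ)
    (hident : ∀ i, IdentDistrib (X i) (X ⟨0, hn⟩) μ μ)
    (m : ℤ) (hm : m ≤ -1) :
    μ {ω | (∏ i, Int.sign (X i ω)) *
        Finset.univ.inf' ⟨⟨0, hn⟩, Finset.mem_univ _⟩ (fun i => |X i ω|) ≤ m}
      = ∑ k ∈ (Finset.range (n + 1)).filter (fun k => Odd k),
          (n.choose k : ℝ≥0∞) * μ {ω | X ⟨0, hn⟩ ω ≤ m} ^ k *
            μ {ω | -m ≤ X ⟨0, hn⟩ ω} ^ (n - k) := by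
  have hevent : {ω | (∏ i, Int.sign (X i ω)) *
      Finset.univ.inf' ⟨⟨0, hn⟩, Finset.mem_univ _⟩ (fun i => |X i ω|) ≤ m} =
      {ω | (∀ i, X i ω ∈ Set.Iic m ∪ Set.Ici (-m)) ∧ Odd #{i | X i ω ∈ Set.Iic m}} :=
    Set.ext fun ω => Int.prod_sign_mul_inf'_abs_le_iff _ _ (by omega)
  have hbinomial := measure_forall_mem_union_and_card_eq_sum_choose hmeas hindep hident
    measurableSet_Iic measurableSet_Ici (Set.Iic_disjoint_Ici.2 (by omega : ¬-m ≤ m)) Odd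
  rw [Fintype.card_fin] at hbinomial
  rw [hevent]
  exact hbinomial

/-- Density evolution identity for the min-sum check node
update, negative values: let `X₁, …, Xₙ` be i.i.d. integer-valued random
variables and let `m ≤ -1` be an integer. Then the probability that the
min-sum check node output `(∏ᵢ sign(Xᵢ)) · minᵢ |Xᵢ|` is at most `m` equals
`∑_{k odd, 0 ≤ k ≤ n} C(n,k) · P(X₁ ≤ m)^k · P(X₁ ≥ -m)^{n-k}`. -/
theorem de_check_node_neg {Ω : Type*} [MeasurableSpace Ω]
    (μ : Measure Ω) [IsProbabilityMeasure μ]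
    (n : ℕ) (hn : 0 < n) (X : Fin n → Ω → ℤ)
    (hmeas : ∀ i, Measurable (X i))
    (hindep : iIndepFun X μ)
    (hident : ∀ i, IdentDistrib (X i) (X ⟨0, hn⟩) μ μ)
    (m : ℤ) (hm : m ≤ -1) :
    μ {ω | (∏ i, Int.sign (X i ω)) *
        Finset.univ.inf' ⟨⟨0, hn⟩, Finset.mem_univ _⟩ (fun i => |X i ω|) ≤ m}
      = ∑ k ∈ (Finset.range (n + 1)).filter (fun k => Odd k),
          (n.choose k : ℝ≥0∞) * μ {ω | X ⟨0, hn⟩ ω ≤ m} ^ k *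
            μ {ω | -m ≤ X ⟨0, hn⟩ ω} ^ (n - k) :=
  de_check_node_neg_general μ n hn X hmeas hindep hident m hm
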